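/- arXiv:1711.01405 — 2 statements merged into one kernel-verified Lean document; each statement's English description precedes it below -/
import Mathlib

section
/- Let r, s be positive integers, n = r + s, and ζ = e^{2πi/n}. For any subset I of {1,...,n} with |I| = r and complement Ī, we have n^r = (∏_{j,k ∈ I, j ≠ k} |2 sin(π(j-k)/n)|) · (∏_{(j,k) ∈ I × Ī} |2 sin(π(j-k)/n)|). -/
/-!
With `ζ = exp (2πi/n)` one has `|2 sin (π m / n)| = ‖1 - ζ ^ m‖`, so `∏_{m=1}^{n-1} |2 sin (π m / n)| = n`
is the norm of the cyclotomic identity `∏_{m=1}^{n-1} (1 - ζ ^ m) = n`. Since `|2 sin (π m / n)|` is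
`n`-periodic in `m`, the same product is obtained from `∏_{k ≠ j} |2 sin (π (j - k) / n)|` for every
`j ∈ {1,…,n}`. For `j ∈ I` the two products in the theorem together run over all `k ≠ j`, so each of
the `r` rows contributes a factor `n`.
-/

open Finset Real

theorem Finset.prod_erase_mul_prod_sdiff {ι M : Type*} [DecidableEq ι] [CommMonoid M]
    {s t : Finset ι} {j : ι} (hj : j ∈ s) (hst : s ⊆ t) (f : ι → M) :
    (∏ k ∈ s.erase j, f k) * ∏ k ∈ t \ s, f k = ∏ k ∈ t.erase j, f k := by
  rw [mul_comm, ← prod_sdiff (erase_subset_erase j hst)]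
  congr 2
  ext k
  by_cases hk : k = j <;> simp_all

/-- `k ↦ j - k (mod n)` is an involution of `{1,…,n} \ {j}` onto `{1,…,n-1}` -/
theorem Function.Periodic.prod_erase_Icc_sub {M : Type*} [CommMonoid M] {g : ℤ → M} {n : ℕ}
    (hg : Function.Periodic g n) {j : ℕ} (hj : j ∈ Icc 1 n) :
    ∏ k ∈ (Icc 1 n).erase j, g (j - k) = ∏ m ∈ Ico 1 n, g m := by
  rw [mem_Icc] at hj
  let σ : ℕ → ℕ := fun k => if k < j then j - k else j + n - k
  refine prod_nbij' σ σ ?_ ?_ ?_ ?_ ?_ <;> intro k hk <;>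
    simp only [mem_erase, mem_Icc, mem_Ico] at hk ⊢ <;> simp only [σ]
  iterate 4 split_ifs <;> omega
  · split_ifs with hkj
    · rw [Nat.cast_sub hkj.le]
    · rw [← hg, Nat.cast_sub (by omega)]
      push_cast
      congr 1
      ring

theorem Complex.norm_one_sub_exp_pow (n m : ℕ) :
    ‖1 - Complex.exp (2 * π * Complex.I / n) ^ m‖ = |2 * Real.sin (π * m / n)| := by
  rw [norm_sub_rev, ← Complex.exp_nat_mul,
    show (m : ℂ) * (2 * π * Complex.I / n) = Complex.I * ((2 * π * m / n : ℝ) : ℂ) by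
      push_cast; ring,
    Complex.norm_exp_I_mul_ofReal_sub_one, Real.norm_eq_abs]
  ring_nf

theorem prod_Ico_abs_two_sin {n : ℕ} (hn : n ≠ 0) :
    ∏ m ∈ Ico 1 n, |2 * sin (π * m / n)| = n := by
  obtain ⟨N, rfl⟩ : ∃ N, n = N + 1 := ⟨n - 1, by omega⟩
  have hζ := Complex.isPrimitiveRoot_exp (N + 1) (Nat.succ_ne_zero N)
  rw [prod_Ico_eq_prod_range, Nat.add_sub_cancel]
  calc ∏ k ∈ range N, |2 * sin (π * ↑(1 + k) / ↑(N + 1))|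
      = ‖∏ k ∈ range N, (1 - Complex.exp (2 * π * Complex.I / ↑(N + 1)) ^ (k + 1))‖ := by
        simp only [norm_prod, Complex.norm_one_sub_exp_pow, add_comm 1]
    _ = ↑(N + 1) := by
        rw [hζ.prod_one_sub_pow_eq_order]
        exact_mod_cast Complex.norm_natCast (N + 1)

theorem prod_erase_Icc_abs_two_sin_sub {n j : ℕ} (hj : j ∈ Icc 1 n) :
    ∏ k ∈ (Icc 1 n).erase j, |2 * sin (π * ((j : ℝ) - k) / n)| = n := by
  have hn : n ≠ 0 := by
    have := mem_Icc.1 hj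
    omega
  have hg : Function.Periodic (fun m : ℤ => |2 * sin (π * m / n)|) n := fun m => by
    dsimp only
    rw [show π * ((m + n : ℤ) : ℝ) / n = π * m / n + π by push_cast; field_simp,
      sin_add_pi, mul_neg, abs_neg]
  have hrow := hg.prod_erase_Icc_sub hj
  push_cast at hrow
  rw [hrow, prod_Ico_abs_two_sin hn]

theorem verlinde_sine_identity_general (r s : ℕ)
    (I : Finset ℕ) (hI : I ⊆ Finset.Icc 1 (r + s)) (hcard : I.card = r) :
    ((r + s : ℝ)) ^ r =
      (∏ j ∈ I, ∏ k ∈ I.erase j, |2 * Real.sin (Real.pi * ((j : ℝ) - k) / (r + s))|) *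
      (∏ j ∈ I, ∏ k ∈ Finset.Icc 1 (r + s) \ I,
        |2 * Real.sin (Real.pi * ((j : ℝ) - k) / (r + s))|) := by
  have hrow : ∀ j ∈ I, (∏ k ∈ I.erase j, |2 * sin (π * ((j : ℝ) - k) / (r + s))|) *
      ∏ k ∈ Icc 1 (r + s) \ I, |2 * sin (π * ((j : ℝ) - k) / (r + s))| = r + s := by
    intro j hj
    rw [prod_erase_mul_prod_sdiff hj hI]
    exact_mod_cast prod_erase_Icc_abs_two_sin_sub (hI hj)
  rw [← prod_mul_distrib, prod_congr rfl hrow, prod_const, hcard]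

/-- Let `r, s > 0`, `n = r + s`. For any `I ⊆ {1,…,n}` with `|I| = r` and complement `Ī`,
`n^r = (∏_{j,k ∈ I, j ≠ k} |2 sin(π(j-k)/n)|) · (∏_{(j,k) ∈ I × Ī} |2 sin(π(j-k)/n)|)`.
(The first product is over ordered pairs of distinct elements of `I`; it is `1` if `|I| = 1`.) -/
theorem verlinde_sine_identity (r s : ℕ) (hr : 0 < r) (hs : 0 < s)
    (I : Finset ℕ) (hI : I ⊆ Finset.Icc 1 (r + s)) (hcard : I.card = r) :
    ((r + s : ℝ)) ^ r =
      (∏ j ∈ I, ∏ k ∈ I.erase j, |2 * Real.sin (Real.pi * ((j : ℝ) - k) / (r + s))|) *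
      (∏ j ∈ I, ∏ k ∈ Finset.Icc 1 (r + s) \ I,
        |2 * Real.sin (Real.pi * ((j : ℝ) - k) / (r + s))|) :=
  verlinde_sine_identity_general r s I hI hcard
end

section
/- Let n ≥ 2 and ζ = e^{2πi/n}. For any two r-element subsets I, J of {1,...,n}, letting s_a(ζ^I) denote the Schur polynomial of a partition a (with at most r parts each ≤ n-r) evaluated at the tuple (ζ^j)_{j∈I}, the orthogonality relation Σ_a conj(s_a(ζ^I)) · s_a(ζ^J) = δ_{I,J} · n^r / Vand(ζ^I) holds, where Vand(ζ^I) = ∏_{j,k∈I, j≠k} |ζ^j - ζ^k| (or 1 if r = 1), and the sum is over all partitions a fitting in an r × (n-r) box. -/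
/-- The Schur polynomial of a partition `a` (with at most `r` parts), evaluated at a tuple
`z : Fin r → ℂ`, defined by the bialternant formula
`s_a(z) = det(z_i^{a_j + r - 1 - j}) / det(z_i^{r - 1 - j})`. -/
noncomputable def schurEval (r : ℕ) (a : Fin r → ℕ) (z : Fin r → ℂ) : ℂ :=
  Matrix.det (Matrix.of fun i j : Fin r => z i ^ (a j + (r - 1 - (j : ℕ)))) /
    Matrix.det (Matrix.of fun i j : Fin r => z i ^ (r - 1 - (j : ℕ)))

/-!
Write `δ = (r - 1, …, 1, 0)` and `V(z) = det (z_i ^ (r - 1 - j))`. The maps `a ↦ a + δ` identify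
the partitions in the `r × (n - r)` box with the strictly decreasing sequences in `{0, …, n - 1}`,
so after clearing the denominators `V` the Cauchy–Binet formula turns
`∑_a det (x_i ^ (a + δ)_j) * det (y_i ^ (a + δ)_j)` into `det (∑_{m < n} (x_i y_j) ^ m)`.
For `x = conj ζ^I`, `y = ζ^J` the entries of this matrix are `n δ_{I_i, J_j}` by orthogonality of
the characters of `ℤ/n`, so the determinant is `n ^ r` if `I = J` and `0` otherwise; finally
`conj V(ζ^I) * V(ζ^I) = |V(ζ^I)| ^ 2` is the product of `|ζ^j - ζ^k|` over ordered pairs `j ≠ k`.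
-/

open Finset Matrix ComplexConjugate

theorem Finset.sum_injective_eq_sum_strictMono_sum_perm {ι M : Type*} [LinearOrder ι] [Fintype ι]
    [AddCommMonoid M] {r : ℕ} (F : (Fin r → ι) → M) :
    ∑ f : Fin r → ι with Function.Injective f, F f =
      ∑ g : Fin r → ι with StrictMono g, ∑ σ : Equiv.Perm (Fin r), F (g ∘ σ) := by
  rw [← sum_product']
  refine (sum_bij (fun p _ => p.1 ∘ p.2) ?_ ?_ ?_ fun _ _ => rfl).symm
  · rintro ⟨g, σ⟩ h
    simp only [mem_product, mem_filter_univ] at h ⊢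
    exact h.1.injective.comp σ.injective
  · rintro ⟨g, σ⟩ hg ⟨g', σ'⟩ hg' h
    simp only [mem_product, mem_filter_univ] at hg hg'
    have hgg' : g = g' := by
      have key := Tuple.unique_monotone (f := g ∘ σ) (σ := σ⁻¹) (τ := σ'⁻¹)
        (by simpa [Function.comp_assoc] using hg.1.monotone)
        (by simpa [h, Function.comp_assoc] using hg'.1.monotone)
      calc g = (g ∘ σ) ∘ ⇑σ⁻¹ := by ext; simp
        _ = (g' ∘ σ') ∘ ⇑σ'⁻¹ := by rw [key, h]
        _ = g' := by ext; simp
    subst hgg'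
    simpa using Equiv.coe_fn_injective (hg.1.injective.comp_left h)
  · intro f hf
    simp only [mem_filter_univ] at hf
    refine ⟨(f ∘ Tuple.sort f, (Tuple.sort f)⁻¹), ?_, by ext; simp⟩
    simpa using (Tuple.monotone_sort f).strictMono_of_injective (hf.comp (Tuple.sort f).injective)

namespace Matrix

variable {R ι : Type*} [CommRing R] [Fintype ι]

theorem det_mul_eq_sum_det_submatrix_mul_prod {m : Type*} [Fintype m] [DecidableEq m]
    (A : Matrix m ι R) (B : Matrix ι m R) :
    det (A * B) = ∑ f : m → ι, det (A.submatrix id f) * ∏ i, B (f i) i := by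
  simp only [det_apply', mul_apply, prod_univ_sum, Fintype.piFinset_univ, mul_sum, sum_mul,
    submatrix_apply, id, prod_mul_distrib, mul_assoc]
  exact Finset.sum_comm

theorem det_mul_eq_sum_strictMono [LinearOrder ι] {r : ℕ}
    (A : Matrix (Fin r) ι R) (B : Matrix ι (Fin r) R) :
    det (A * B) = ∑ g : Fin r → ι with StrictMono g,
      det (A.submatrix id g) * det (B.submatrix g id) := by
  have h_inj : ∑ f : Fin r → ι, det (A.submatrix id f) * ∏ i, B (f i) i =
      ∑ f : Fin r → ι with Function.Injective f, det (A.submatrix id f) * ∏ i, B (f i) i := by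
    refine (sum_subset (filter_subset _ _) fun f _ hf => ?_).symm
    obtain ⟨i, j, hij, hne⟩ := Function.not_injective_iff.mp (by simpa using hf)
    rw [det_zero_of_column_eq hne fun k => by simp [hij], zero_mul]
  rw [det_mul_eq_sum_det_submatrix_mul_prod, h_inj, sum_injective_eq_sum_strictMono_sum_perm]
  refine sum_congr rfl fun g _ => ?_
  simp only [det_apply' (B.submatrix g id), mul_sum]
  refine sum_congr rfl fun σ _ => ?_
  rw [show A.submatrix id (g ∘ σ) = (A.submatrix id g).submatrix id σ from rfl, det_permute']
  simp [mul_comm, mul_left_comm]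

theorem det_of_pow_rev {r : ℕ} (v : Fin r → R) :
    det (of fun i j : Fin r => v i ^ (r - 1 - (j : ℕ))) = ∏ i, ∏ j ∈ Ioi i, (v i - v j) := by
  have : (of fun i j : Fin r => v i ^ (r - 1 - (j : ℕ))) = projVandermonde 1 v := by
    ext i j
    simp only [of_apply, projVandermonde_apply, Pi.one_apply, one_pow, one_mul, Fin.val_rev]
    congr 1
    omega
  simp [this, det_projVandermonde]

theorem det_of_orderEmbOfFin_eq_ite {α : Type*} [LinearOrder α] {s t : Finset α} {r : ℕ}
    (hs : s.card = r) (ht : t.card = r) (c : R) :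
    det (of fun i j => if s.orderEmbOfFin hs i = t.orderEmbOfFin ht j then c else 0) =
      if s = t then c ^ r else 0 := by
  split_ifs with hst
  · subst hst
    have : (of fun i j => if s.orderEmbOfFin hs i = s.orderEmbOfFin ht j then c else 0) =
        diagonal fun _ => c := by
      ext i j
      simp [diagonal_apply]
    rw [this, det_diagonal, prod_const, card_univ, Fintype.card_fin]
  · obtain ⟨x, hxs, hxt⟩ := not_subset.mp fun h => hst (eq_of_subset_of_card_le h (by omega))
    obtain ⟨i, rfl⟩ : ∃ i, s.orderEmbOfFin hs i = x :=
      ⟨(s.orderIsoOfFin hs).symm ⟨x, hxs⟩, by simp [← coe_orderIsoOfFin_apply]⟩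
    refine det_eq_zero_of_row_eq_zero i fun j => if_neg fun h => hxt ?_
    exact h ▸ orderEmbOfFin_mem t ht j

end Matrix

theorem Finset.prod_prod_erase_eq_prod_orderEmbOfFin {α M : Type*} [LinearOrder α]
    [CommMonoid M] {s : Finset α} {r : ℕ} (hs : s.card = r) (F : α → α → M) :
    ∏ j ∈ s, ∏ k ∈ s.erase j, F j k =
      ∏ i, ∏ i' ∈ univ.erase i, F (s.orderEmbOfFin hs i) (s.orderEmbOfFin hs i') := by
  conv_lhs => rw [← map_orderEmbOfFin_univ s hs]
  simp only [prod_map, ← map_erase]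
  rfl

theorem conj_det_mul_det_of_pow_rev {r : ℕ} (w : Fin r → ℂ) :
    det (of fun i j : Fin r => conj (w i) ^ (r - 1 - (j : ℕ))) *
        det (of fun i j : Fin r => w i ^ (r - 1 - (j : ℕ))) =
      ((∏ i, ∏ j ∈ univ.erase i, ‖w i - w j‖ : ℝ) : ℂ) := by
  rw [det_of_pow_rev, det_of_pow_rev, ← prod_mul_distrib]
  simp_rw [← compl_singleton, ← prod_prod_Ioi_mul_eq_prod_prod_off_diag fun j i => ‖w i - w j‖,
    ← prod_mul_distrib, ← map_sub, Complex.conj_mul']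
  push_cast
  refine prod_congr rfl fun i _ => prod_congr rfl fun j _ => ?_
  rw [norm_sub_rev (w j), sq]

theorem Complex.sum_range_pow_conj_mul_eq_ite {n : ℕ} (hn : n ≠ 0) {z w : ℂ}
    (hz : z ^ n = 1) (hw : w ^ n = 1) :
    ∑ m ∈ range n, (conj z * w) ^ m = if z = w then (n : ℂ) else 0 := by
  have hz0 : z ≠ 0 := by rintro rfl; simp [hn] at hz
  rw [← Complex.inv_eq_conj (Complex.norm_eq_one_of_pow_eq_one hz hn)]
  split_ifs with hzw
  · subst hzw
    simp [hz0]
  · have hne : z⁻¹ * w ≠ 1 := fun h => hzw ((inv_mul_eq_one₀ hz0).mp h)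
    rw [geom_sum_eq hne, mul_pow, inv_pow, hz, hw, inv_one, one_mul, sub_self, zero_div]

theorem IsPrimitiveRoot.injOn_pow_Icc {M₀ : Type*} [CommMonoidWithZero M₀] [IsCancelMulZero M₀]
    [Nontrivial M₀] {ζ : M₀} {n : ℕ} (hζ : IsPrimitiveRoot ζ n) :
    Set.InjOn (ζ ^ ·) (Finset.Icc 1 n) := by
  intro p hp q hq h
  simp only [coe_Icc, Set.mem_Icc] at hp hq
  have := hζ.injOn_pow_mul (hζ.ne_zero (by omega)) (x₁ := p - 1) (x₂ := q - 1)
    (by simp; omega) (by simp; omega)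
    (by simp only [← pow_succ, Nat.sub_add_cancel hp.1, Nat.sub_add_cancel hq.1]; exact h)
  omega

theorem IsPrimitiveRoot.sum_range_pow_conj_pow_mul_pow {ζ : ℂ} {n p q : ℕ}
    (hζ : IsPrimitiveRoot ζ n) (hp : p ∈ Icc 1 n) (hq : q ∈ Icc 1 n) :
    ∑ m ∈ range n, (conj (ζ ^ p) * ζ ^ q) ^ m = if p = q then (n : ℂ) else 0 := by
  have hn : n ≠ 0 := by simp only [mem_Icc] at hp; omega
  have hpow (k : ℕ) : (ζ ^ k) ^ n = 1 := by rw [pow_right_comm, hζ.pow_eq_one, one_pow]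
  rw [Complex.sum_range_pow_conj_mul_eq_ite hn (hpow p) (hpow q)]
  exact if_congr (hζ.injOn_pow_Icc.eq_iff hp hq) rfl rfl

theorem antitone_add_val_of_strictAnti :
    ∀ {r : ℕ} {f : Fin r → ℕ}, StrictAnti f → Antitone fun j => f j + (j : ℕ)
  | 0, _, _ => fun i => i.elim0
  | _ + 1, f, hf => Fin.antitone_iff_succ_le.2 fun i => by
      have := hf (Fin.castSucc_lt_succ (i := i))
      simp only [Fin.val_succ, Fin.val_castSucc]
      omega

theorem add_val_mem_Icc_of_strictAnti {r : ℕ} {f : Fin r → ℕ} (hf : StrictAnti f) (j : Fin r) :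
    f j + j ∈ Set.Icc (r - 1) (f ⟨0, j.pos⟩) := by
  have h_last := antitone_add_val_of_strictAnti hf
    (show j ≤ ⟨r - 1, by have := j.isLt; omega⟩ from Fin.le_iff_val_le_val.2 (by simp; omega))
  have h_zero := antitone_add_val_of_strictAnti hf
    (show (⟨0, j.pos⟩ : Fin r) ≤ j from Fin.le_iff_val_le_val.2 (by simp))
  simp only at h_last h_zero
  exact ⟨by omega, by omega⟩

section Staircase

variable {n r : ℕ}

/-- The exponents `a + δ`, read in `(Fin n)ᵒᵈ` so that they increase strictly. -/
def addStaircase (hrn : r ≤ n) (a : Fin r → Fin (n - r + 1)) : Fin r → (Fin n)ᵒᵈ :=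
  fun j => OrderDual.toDual ⟨a j + (r - 1 - j), by omega⟩

theorem sum_addStaircase_eq_sum_strictMono {M : Type*} [AddCommMonoid M] (hrn : r ≤ n)
    (F : (Fin r → (Fin n)ᵒᵈ) → M) :
    ∑ a ∈ univ.filter (fun a : Fin r → Fin (n - r + 1) => ∀ i j : Fin r, i ≤ j → a j ≤ a i),
      F (addStaircase hrn a) = ∑ f : Fin r → (Fin n)ᵒᵈ with StrictMono f, F f := by
  refine sum_bij (fun a _ => addStaircase hrn a) ?_ ?_ ?_ fun _ _ => rfl
  · intro a ha
    simp only [mem_filter_univ] at ha ⊢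
    intro i j hij
    have := ha i j hij.le
    change (⟨_, _⟩ : Fin n) < ⟨_, _⟩
    simp only [Fin.mk_lt_mk, Fin.le_iff_val_le_val] at this hij ⊢
    omega
  · intro a _ b _ h
    funext j
    have := congrArg (fun f => ((OrderDual.ofDual (f j) : Fin n) : ℕ)) h
    simp only [addStaircase, OrderDual.ofDual_toDual] at this
    exact Fin.ext (by omega)
  · intro f hf
    simp only [mem_filter_univ] at hf
    set l : Fin r → ℕ := fun j => ((OrderDual.ofDual (f j) : Fin n) : ℕ)
    have hl : StrictAnti l := fun i j hij => hf hij
    have hbounds (j : Fin r) : r - 1 ≤ l j + j ∧ l j + j < n := by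
      obtain ⟨h_lower, h_upper⟩ := add_val_mem_Icc_of_strictAnti hl j
      have : l ⟨0, j.pos⟩ < n := (OrderDual.ofDual (f _)).isLt
      omega
    refine ⟨fun j => ⟨l j + j - (r - 1), by have := hbounds j; omega⟩, ?_, ?_⟩
    · simp only [mem_filter_univ, Fin.le_iff_val_le_val]
      intro i j hij
      have := antitone_add_val_of_strictAnti hl hij
      simp only at this
      omega
    · funext j
      have := hbounds j
      apply OrderDual.ofDual.injective
      ext
      simp only [addStaircase, OrderDual.ofDual_toDual, l] at this ⊢
      omega

theorem sum_schurEval_mul_schurEval (hrn : r ≤ n) (x y : Fin r → ℂ) :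
    ∑ a ∈ univ.filter (fun a : Fin r → Fin (n - r + 1) => ∀ i j : Fin r, i ≤ j → a j ≤ a i),
      schurEval r (fun i => (a i : ℕ)) x * schurEval r (fun i => (a i : ℕ)) y =
    det (of fun i j => ∑ m ∈ range n, (x i * y j) ^ m) /
      (det (of fun i j : Fin r => x i ^ (r - 1 - (j : ℕ))) *
        det (of fun i j : Fin r => y i ^ (r - 1 - (j : ℕ)))) := by
  simp only [schurEval, div_mul_div_comm, ← sum_div]
  congr 1
  let X : Matrix (Fin r) (Fin n)ᵒᵈ ℂ := of fun i m => x i ^ ((OrderDual.ofDual m : Fin n) : ℕ)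
  let Y : Matrix (Fin n)ᵒᵈ (Fin r) ℂ := of fun m j => y j ^ ((OrderDual.ofDual m : Fin n) : ℕ)
  have hXY : X * Y = of fun i j => ∑ m ∈ range n, (x i * y j) ^ m := by
    ext i j
    simp only [X, Y, mul_apply, of_apply, ← mul_pow]
    exact Fin.sum_univ_eq_sum_range (fun m => (x i * y j) ^ m) n
  rw [← hXY, det_mul_eq_sum_strictMono, ← sum_addStaircase_eq_sum_strictMono hrn]
  refine sum_congr rfl fun a _ => ?_
  rw [← det_transpose (Y.submatrix _ id)]
  rfl

end Staircase

theorem conj_schurEval (r : ℕ) (a : Fin r → ℕ) (z : Fin r → ℂ) :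
    conj (schurEval r a z) = schurEval r a (fun i => conj (z i)) := by
  simp only [schurEval, map_div₀, RingHom.map_det, RingHom.mapMatrix_apply]
  congr 2 <;> ext <;> simp

theorem schur_orthogonality_general (n r : ℕ) (hn : 2 ≤ n) (hrn : r ≤ n)
    (I J : Finset ℕ) (hI : I ⊆ Finset.Icc 1 n) (hJ : J ⊆ Finset.Icc 1 n)
    (hIc : I.card = r) (hJc : J.card = r) :
    (∑ a ∈ Finset.univ.filter
        (fun a : Fin r → Fin (n - r + 1) => ∀ i j : Fin r, i ≤ j → a j ≤ a i),
      (starRingEnd ℂ)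
          (schurEval r (fun i => (a i : ℕ))
            (fun i => Complex.exp (2 * Real.pi * Complex.I / n) ^
              ((I.orderIsoOfFin hIc i : ℕ)))) *
        schurEval r (fun i => (a i : ℕ))
          (fun i => Complex.exp (2 * Real.pi * Complex.I / n) ^
            ((J.orderIsoOfFin hJc i : ℕ))))
      = if I = J then
          (n : ℂ) ^ r /
            ((∏ j ∈ I, ∏ k ∈ I.erase j,
              ‖Complex.exp (2 * Real.pi * Complex.I / n) ^ j
                - Complex.exp (2 * Real.pi * Complex.I / n) ^ k‖ : ℝ) : ℂ)
        else 0 := by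
  set ζ : ℂ := Complex.exp (2 * Real.pi * Complex.I / n)
  have hζ : IsPrimitiveRoot ζ n := Complex.isPrimitiveRoot_exp n (by omega)
  simp only [conj_schurEval, coe_orderIsoOfFin_apply]
  rw [sum_schurEval_mul_schurEval hrn]
  simp_rw [hζ.sum_range_pow_conj_pow_mul_pow (hI (orderEmbOfFin_mem I hIc _))
    (hJ (orderEmbOfFin_mem J hJc _)), det_of_orderEmbOfFin_eq_ite]
  split_ifs with hIJ
  · subst hIJ
    rw [conj_det_mul_det_of_pow_rev, prod_prod_erase_eq_prod_orderEmbOfFin hIc]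
  · rw [zero_div]

/-- Orthogonality of Schur polynomial values at roots of unity (Rietsch, Prop. 4.3(3)):
for `n ≥ 2`, `ζ = e^{2πi/n}`, and `r`-element subsets `I, J ⊆ {1,…,n}`, summing over all
partitions `a` fitting in an `r × (n-r)` box,
`Σ_a conj(s_a(ζ^I)) · s_a(ζ^J) = δ_{I,J} · n^r / Vand(ζ^I)` where
`Vand(ζ^I) = ∏_{j,k ∈ I, j≠k} |ζ^j - ζ^k|` (an empty product, i.e. `1`, if `r = 1`). -/
theorem schur_orthogonality (n r : ℕ) (hn : 2 ≤ n) (hr : 0 < r) (hrn : r ≤ n)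
    (I J : Finset ℕ) (hI : I ⊆ Finset.Icc 1 n) (hJ : J ⊆ Finset.Icc 1 n)
    (hIc : I.card = r) (hJc : J.card = r) :
    (∑ a ∈ Finset.univ.filter
        (fun a : Fin r → Fin (n - r + 1) => ∀ i j : Fin r, i ≤ j → a j ≤ a i),
      (starRingEnd ℂ)
          (schurEval r (fun i => (a i : ℕ))
            (fun i => Complex.exp (2 * Real.pi * Complex.I / n) ^
              ((I.orderIsoOfFin hIc i : ℕ)))) *
        schurEval r (fun i => (a i : ℕ))
          (fun i => Complex.exp (2 * Real.pi * Complex.I / n) ^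
            ((J.orderIsoOfFin hJc i : ℕ))))
      = if I = J then
          (n : ℂ) ^ r /
            ((∏ j ∈ I, ∏ k ∈ I.erase j,
              ‖Complex.exp (2 * Real.pi * Complex.I / n) ^ j
                - Complex.exp (2 * Real.pi * Complex.I / n) ^ k‖ : ℝ) : ℂ)
        else 0 :=
  schur_orthogonality_general n r hn hrn I J hI hJ hIc hJc
end
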